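/- arXiv:2010.13667 — 4 statements merged into one kernel-verified Lean document; each statement's English description precedes it below -/
import Mathlib

section
/- Let G be a connected simple graph on n ≥ 6 vertices, let c₁c₂ be a non-edge of G, and suppose every vertex of G other than c₁ and c₂ has degree exactly n-2. Then for every non-edge ab of G with {a,b} ≠ {c₁,c₂}, the graph G + ab contains a path on at least n vertices (i.e., a Hamilton path) whose endpoints are c₁ and c₂ and which contains the edge ab, except possibly when {d_G(c₁), d_G(c₂)} = {1, n-3}. -/
open SimpleGraph

variable {V : Type*}

/-- `x 1, …, x m` is a path in `G` (1-indexed): injective on `[1, m]`, with consecutive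
vertices adjacent. -/
def IsIndexedPath (G : SimpleGraph V) (x : ℕ → V) (m : ℕ) : Prop :=
  (∀ i j, 1 ≤ i → i ≤ m → 1 ≤ j → j ≤ m → x i = x j → i = j) ∧
  ∀ i, 1 ≤ i → i < m → G.Adj (x i) (x (i + 1))

/-- The vertex set of the indexed path `x 1, …, x m`. -/
def pathVerts (x : ℕ → V) (m : ℕ) : Set V := {v | ∃ i, 1 ≤ i ∧ i ≤ m ∧ x i = v}

/-- `N_P(v)`: the neighbours of `v` among the vertices of the path. -/
def pathNbrs (G : SimpleGraph V) (x : ℕ → V) (m : ℕ) (v : V) : Set V :=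
  {u | u ∈ pathVerts x m ∧ G.Adj v u}

/-- `N_P⁻(x₁)`: immediate predecessors on `P` of the path-neighbours of `x₁`. -/
def predNbrs (G : SimpleGraph V) (x : ℕ → V) (m : ℕ) : Set V :=
  {v | ∃ i, 2 ≤ i ∧ i ≤ m ∧ G.Adj (x 1) (x i) ∧ v = x (i - 1)}

/-- `N_P⁺(x_m)`: immediate successors on `P` of the path-neighbours of `x_m`. -/
def succNbrs (G : SimpleGraph V) (x : ℕ → V) (m : ℕ) : Set V :=
  {v | ∃ i, 1 ≤ i ∧ i < m ∧ G.Adj (x m) (x i) ∧ v = x (i + 1)}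

/-- `G` contains no cycle of length at least `k`, i.e. `c(G) < k`. -/
def NoCycleGE (G : SimpleGraph V) (k : ℕ) : Prop :=
  ∀ (v : V) (w : G.Walk v v), w.IsCycle → w.length < k

/-- `G` contains a cycle of length at least `L`. -/
def HasCycleGE (G : SimpleGraph V) (L : ℕ) : Prop :=
  ∃ (v : V) (w : G.Walk v v), w.IsCycle ∧ L ≤ w.length

/-- `G` is 2-connected: at least 3 vertices and deleting any single vertex leaves a
connected graph. -/
def TwoConnected (G : SimpleGraph V) [Fintype V] : Prop :=
  3 ≤ Fintype.card V ∧ ∀ v : V, (G.induce {u | u ≠ v}).Connected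

/-- The vertex set of the `α`-disintegration `H(G, α)` of `G`: the largest vertex set on
which the induced subgraph has minimum degree at least `α + 1`. -/
noncomputable def disint (G : SimpleGraph V) (α : ℕ) : Set V :=
  ⋃₀ {S : Set V | ∀ v ∈ S, α + 1 ≤ {u | u ∈ S ∧ G.Adj v u}.ncard}

/-- `N_s(G)`: the number of `s`-cliques of `G`. -/
noncomputable def cliqueCount (G : SimpleGraph V) (s : ℕ) : ℕ :=
  {S : Finset V | G.IsNClique s S}.ncard

/-- `h_s(n, k, a) = C(k - a, s) + (n - k + a) · C(a, s - 1)`. -/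
def hval (n k a s : ℕ) : ℕ :=
  Nat.choose (k - a) s + (n - k + a) * Nat.choose a (s - 1)

/-- The graph `H(n, k, a)` on `Fin n`: the first `a` vertices form the set `A`, the next
`k - 2a` vertices form `C`, and the remaining `n - k + a` vertices form `B`; `A ∪ C` is a
clique and every vertex of `A` is joined to every vertex of `B`. -/
def Hgraph (n k a : ℕ) : SimpleGraph (Fin n) :=
  SimpleGraph.fromRel fun i j =>
    (i.val < a ∧ k - a ≤ j.val) ∨ (i.val < k - a ∧ j.val < k - a)

/-- `G` is isomorphic to a subgraph of `H`. -/
def IsSubgraphOf {W : Type*} (G : SimpleGraph V) (H : SimpleGraph W) : Prop :=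
  ∃ f : V → W, Function.Injective f ∧ ∀ a b, G.Adj a b → H.Adj (f a) (f b)

/-- Every connected component of `H` is a star: there is an assignment of a "center" to
each vertex such that every edge joins the common center of its endpoints to a leaf. -/
def IsStarForest (H : SimpleGraph V) : Prop :=
  ∃ f : V → V, ∀ a b, H.Adj a b → (f a = a ∧ f b = a) ∨ (f a = b ∧ f b = b)

/-- `(i, j)` is a crossing pair of the indexed path `x 1, …, x m`. -/
def CrossPair (G : SimpleGraph V) (x : ℕ → V) (m i j : ℕ) : Prop :=
  1 ≤ i ∧ i < j ∧ j ≤ m ∧ G.Adj (x m) (x i) ∧ G.Adj (x 1) (x j)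

/-- `(i, j)` is a minimal crossing pair of the indexed path `x 1, …, x m`. -/
def MinCrossPair (G : SimpleGraph V) (x : ℕ → V) (m i j : ℕ) : Prop :=
  CrossPair G x m i j ∧
    ∀ h, i < h → h < j → ¬G.Adj (x 1) (x h) ∧ ¬G.Adj (x m) (x h)

/-- One application of the successor operation along the path to a set of vertices. -/
def succStep (x : ℕ → V) (m : ℕ) (S : Set V) : Set V :=
  {v | ∃ i, 1 ≤ i ∧ i < m ∧ x i ∈ S ∧ v = x (i + 1)}

/-- `N_P^{+i}(x_m)`: the `i`-fold iterated successor set of `N_P(x_m)` along the path. -/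
def iterNbrSucc (G : SimpleGraph V) (x : ℕ → V) (m i : ℕ) : Set V :=
  (succStep x m)^[i] (pathNbrs G x m (x m))

/-! Every vertex other than `c₁, c₂` misses exactly one other vertex, so in `G + ab` an endpoint
of `ab` other than `c₁, c₂` is adjacent to everything. Hamilton paths are then built greedily:
a set `S` in which every vertex misses at most one vertex can be traversed between two outside
vertices that each have a neighbour in `S`, unless `S` is a non-adjacent pair (possible only for
`n = 6`, where the path is written down by hand). The construction fails only when, up to
symmetry, `a = c₁` and `b` is the only neighbour of `c₂`; then every other interior vertex misses
`c₂` and hence sees `c₁`, giving degrees `n - 3` and `1`. -/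

namespace SimpleGraph

variable {H : SimpleGraph V}

lemma adj_of_compl_neighborSet_subsingleton {v w z : V}
    (hv : (Hᶜ.neighborSet v).Subsingleton) (hw : Hᶜ.Adj v w) (hvz : v ≠ z) (hzw : z ≠ w) :
    H.Adj v z := by
  by_contra hz
  exact hzw (hv ⟨hvz, hz⟩ hw)

lemma compl_neighborSet_subsingleton_of_ncard_eq [Fintype V] {v : V}
    (h : (H.neighborSet v).ncard = Fintype.card V - 2) : (Hᶜ.neighborSet v).Subsingleton := by
  classical
  rw [Set.ncard_eq_toFinset_card', Set.toFinset_card, card_neighborSet_eq_degree] at h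
  rw [← Set.ncard_le_one_iff_subsingleton, Set.ncard_eq_toFinset_card', Set.toFinset_card,
    card_neighborSet_eq_degree, degree_compl]
  omega

lemma compl_neighborSet_sup_subsingleton {v : V} (h : (Hᶜ.neighborSet v).Subsingleton)
    (K : SimpleGraph V) : ((H ⊔ K)ᶜ.neighborSet v).Subsingleton :=
  h.anti (neighborSet_mono (compl_le_compl le_sup_left) v)

lemma isUniversal_sup_edge_left {a b : V} (ha : (Hᶜ.neighborSet a).Subsingleton) (hab : a ≠ b)
    (hnadj : ¬H.Adj a b) : (H ⊔ edge a b).IsUniversal a := fun v hav => by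
  rcases eq_or_ne v b with rfl | hvb
  · exact Or.inr ((edge_adj _ _ _ _).mpr ⟨Or.inl ⟨rfl, rfl⟩, hab⟩)
  · exact Or.inl (adj_of_compl_neighborSet_subsingleton ha ⟨hab, hnadj⟩ hav hvb)

lemma isUniversal_sup_edge_right {a b : V} (hb : (Hᶜ.neighborSet b).Subsingleton) (hab : a ≠ b)
    (hnadj : ¬H.Adj a b) : (H ⊔ edge a b).IsUniversal b := by
  rw [edge_comm]
  exact isUniversal_sup_edge_left hb hab.symm (fun h => hnadj h.symm)

variable [DecidableEq V]

section Traversal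

variable {S : Finset V} {x y : V}

lemma isPath_cons_of_support_iff {u : V} {w : H.Walk x y} (hw : w.IsPath)
    (hsupp : ∀ v, v ∈ w.support ↔ v = x ∨ v = y ∨ v ∈ S) (hux : H.Adj u x) (hu : u ≠ x)
    (huy : u ≠ y) (huS : u ∉ S) :
    (Walk.cons hux w).IsPath ∧
      ∀ v, v ∈ (Walk.cons hux w).support ↔ v = u ∨ v = y ∨ v ∈ insert x S :=
  ⟨hw.cons (by rw [hsupp]; tauto), fun v => by
    rw [Walk.support_cons, List.mem_cons, hsupp, Finset.mem_insert]; tauto⟩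

lemma exists_next_of_not_isClique (hxS : x ∉ S) (hyS : y ∉ S)
    (hS : ∀ v ∈ S, (Hᶜ.neighborSet v).Subsingleton)
    (h2 : S.card = 2 → H.IsClique (S : Set V)) (hnc : ¬H.IsClique (S : Set V)) :
    ∃ v ∈ S, H.Adj x v ∧ (∃ u ∈ S.erase v, H.Adj v u) ∧ (∃ u ∈ S.erase v, H.Adj u y) ∧
      ((S.erase v).card = 2 → H.IsClique (S.erase v : Set V)) := by
  obtain ⟨v, hvS, u, huS, hvu, hnadj⟩ : ∃ v ∈ S, ∃ u ∈ S, v ≠ u ∧ ¬H.Adj v u := by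
    simpa [IsClique, Set.Pairwise] using hnc
  have hvu' : Hᶜ.Adj v u := ⟨hvu, hnadj⟩
  have hx : ∀ z ∈ S, z ≠ x := fun z hz h => hxS (h ▸ hz)
  have hy : ∀ z ∈ S, z ≠ y := fun z hz h => hyS (h ▸ hz)
  have huv : u ∈ S.erase v := Finset.mem_erase.mpr ⟨hvu.symm, huS⟩
  obtain ⟨w, hwS, hwv, hwu⟩ : ∃ w ∈ S, w ≠ v ∧ w ≠ u := by
    by_contra! h
    have hsub : S ⊆ {v, u} := fun w hw => by
      rcases eq_or_ne w v with rfl | hwv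
      · simp
      · simp [h w hw hwv]
    exact hnc (h2 ((Finset.card_le_card hsub).trans Finset.card_le_two |>.antisymm
      (Finset.one_lt_card.mpr ⟨v, hvS, u, huS, hvu⟩)))
  refine ⟨v, hvS, (adj_of_compl_neighborSet_subsingleton (hS v hvS) hvu' (hx v hvS)
      (hx u huS).symm).symm, ⟨w, Finset.mem_erase.mpr ⟨hwv, hwS⟩,
      adj_of_compl_neighborSet_subsingleton (hS v hvS) hvu' hwv.symm hwu⟩,
      ⟨u, huv, adj_of_compl_neighborSet_subsingleton (hS u huS) hvu'.symm (hy u huS)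
        (hy v hvS).symm⟩, fun hcard => ?_⟩
  obtain ⟨p, q, hpq, hpqS⟩ := Finset.card_eq_two.mp hcard
  have hu : ∀ z ∈ S.erase v, z ≠ u → H.Adj u z := fun z hz hzu =>
    adj_of_compl_neighborSet_subsingleton (hS u huS) hvu'.symm (Ne.symm hzu)
      (Finset.ne_of_mem_erase hz)
  rw [hpqS, Finset.coe_pair, isClique_pair]
  intro _
  rw [hpqS] at hu huv
  simp only [Finset.mem_insert, Finset.mem_singleton] at huv
  rcases huv with rfl | rfl
  · exact hu q (by simp) hpq.symm
  · exact (hu p (by simp) hpq).symm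

lemma exists_next_of_isClique (hxy : x ≠ y) (hxS : x ∉ S) (hyS : y ∉ S)
    (hS : ∀ v ∈ S, (Hᶜ.neighborSet v).Subsingleton)
    (hx : ∃ v ∈ S, H.Adj x v) (hy : ∃ v ∈ S, H.Adj v y) (hS2 : S.Nontrivial)
    (hc : H.IsClique (S : Set V)) :
    ∃ v ∈ S, H.Adj x v ∧ (∃ u ∈ S.erase v, H.Adj v u) ∧ (∃ u ∈ S.erase v, H.Adj u y) ∧
      ((S.erase v).card = 2 → H.IsClique (S.erase v : Set V)) := by
  -- if possible, leave a neighbour of `y` behind by starting at a non-neighbour of `y`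
  obtain ⟨v, hvS, hxv, hvy⟩ : ∃ v ∈ S, H.Adj x v ∧ ∃ u ∈ S.erase v, H.Adj u y := by
    by_cases hall : ∀ v ∈ S, H.Adj v y
    · obtain ⟨v, hvS, hxv⟩ := hx
      obtain ⟨u, hu⟩ := hS2.erase_nonempty (a := v)
      exact ⟨v, hvS, hxv, u, hu, hall u (Finset.mem_of_mem_erase hu)⟩
    · push Not at hall
      obtain ⟨v, hvS, hvy⟩ := hall
      obtain ⟨u, huS, huy⟩ := hy
      have hvx : v ≠ x := fun h => hxS (h ▸ hvS)
      have hvy' : Hᶜ.Adj v y := ⟨fun h => hyS (h ▸ hvS), hvy⟩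
      exact ⟨v, hvS, (adj_of_compl_neighborSet_subsingleton (hS v hvS) hvy' hvx hxy).symm, u,
        Finset.mem_erase.mpr ⟨fun h => hvy (h ▸ huy), huS⟩, huy⟩
  obtain ⟨u, hu⟩ := hS2.erase_nonempty (a := v)
  exact ⟨v, hvS, hxv,
    ⟨u, hu, hc hvS (Finset.mem_of_mem_erase hu) (Finset.ne_of_mem_erase hu).symm⟩,
    hvy, fun _ => hc.subset (by simp)⟩

lemma exists_next (hxy : x ≠ y) (hxS : x ∉ S) (hyS : y ∉ S)
    (hS : ∀ v ∈ S, (Hᶜ.neighborSet v).Subsingleton)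
    (hx : ∃ v ∈ S, H.Adj x v) (hy : ∃ v ∈ S, H.Adj v y)
    (h2 : S.card = 2 → H.IsClique (S : Set V)) (hS2 : S.Nontrivial) :
    ∃ v ∈ S, H.Adj x v ∧ (∃ u ∈ S.erase v, H.Adj v u) ∧ (∃ u ∈ S.erase v, H.Adj u y) ∧
      ((S.erase v).card = 2 → H.IsClique (S.erase v : Set V)) := by
  by_cases hc : H.IsClique (S : Set V)
  · exact exists_next_of_isClique hxy hxS hyS hS hx hy hS2 hc
  · exact exists_next_of_not_isClique hxS hyS hS h2 hc

theorem exists_isPath_through (hxy : x ≠ y) (hxS : x ∉ S) (hyS : y ∉ S)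
    (hS : ∀ v ∈ S, (Hᶜ.neighborSet v).Subsingleton)
    (hx : ∃ v ∈ S, H.Adj x v) (hy : ∃ v ∈ S, H.Adj v y)
    (h2 : S.card = 2 → H.IsClique (S : Set V)) :
    ∃ w : H.Walk x y, w.IsPath ∧ ∀ v, v ∈ w.support ↔ v = x ∨ v = y ∨ v ∈ S := by
  induction S using Finset.strongInduction generalizing x with
  | H S ih =>
  rcases Finset.Nonempty.exists_eq_singleton_or_nontrivial (hx.imp fun _ h => h.1) with
    ⟨v, rfl⟩ | hS2
  · obtain ⟨_, hv, hxv⟩ := hx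
    obtain ⟨_, hv', hvy⟩ := hy
    rw [Finset.mem_singleton] at hv hv' hxS hyS
    subst hv hv'
    refine ⟨.cons hxv (.cons hvy .nil), ?_, fun z => ?_⟩
    · simp [Walk.isPath_def, hxy, hxS, Ne.symm hyS]
    · simp only [Walk.support_cons, Walk.support_nil, List.mem_cons, List.not_mem_nil,
        Finset.mem_singleton]
      tauto
  obtain ⟨v, hvS, hxv, hv, hy', h2'⟩ := exists_next hxy hxS hyS hS hx hy h2 hS2
  obtain ⟨w, hw, hsupp⟩ := ih (S.erase v) (Finset.erase_ssubset hvS) (fun h => hyS (h ▸ hvS))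
    (S.notMem_erase v) (fun h => hyS (Finset.mem_of_mem_erase h))
    (fun u hu => hS u (Finset.mem_of_mem_erase hu)) hv hy' h2'
  rw [← Finset.insert_erase hvS]
  exact ⟨_, isPath_cons_of_support_iff hw hsupp hxv (fun h => hxS (h ▸ hvS)) hxy
    (fun h => hxS (Finset.mem_of_mem_erase h))⟩

end Traversal

def HasHamiltonPathVia (H : SimpleGraph V) (u v : V) (e : Sym2 V) : Prop :=
  ∃ p : H.Walk u v, p.IsHamiltonian ∧ e ∈ p.edges

lemma HasHamiltonPathVia.symm {u v : V} {e : Sym2 V} (h : H.HasHamiltonPathVia u v e) :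
    H.HasHamiltonPathVia v u e := by
  obtain ⟨p, hp, he⟩ := h
  exact ⟨p.reverse, hp.isPath.reverse.isHamiltonian_of_mem (by simp [hp.mem_support]),
    by simpa [Walk.edges_reverse] using he⟩

variable {G : SimpleGraph V} {c₁ c₂ a b : V}

lemma ncard_neighborSet_of_forall_adj_eq [Fintype V] (hcon : G.Connected) (hc : c₁ ≠ c₂)
    (hne : ¬G.Adj c₁ c₂) (hint : ∀ v, v ≠ c₁ → v ≠ c₂ → (Gᶜ.neighborSet v).Subsingleton)
    (hb₁ : b ≠ c₁) (hb₂ : b ≠ c₂) (hc₁b : ¬G.Adj c₁ b) (hc₂ : ∀ v, G.Adj c₂ v → v = b) :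
    (G.neighborSet c₁).ncard = Fintype.card V - 3 ∧ (G.neighborSet c₂).ncard = 1 := by
  have : Nontrivial V := ⟨c₁, c₂, hc⟩
  obtain ⟨v, hv⟩ := hcon.preconnected.exists_adj_of_nontrivial c₂
  have hc₂b : G.Adj c₂ b := hc₂ v hv ▸ hv
  have h₁ : G.neighborSet c₁ = ↑({c₁, c₂, b}ᶜ : Finset V) := by
    ext v
    simp only [mem_neighborSet, Finset.coe_compl, Set.mem_compl_iff, Finset.mem_coe,
      Finset.mem_insert, Finset.mem_singleton, not_or]
    refine ⟨fun h => ⟨h.ne.symm, fun h' => hne (h' ▸ h), fun h' => hc₁b (h' ▸ h)⟩,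
      fun ⟨hv₁, hv₂, hvb⟩ => ?_⟩
    exact (adj_of_compl_neighborSet_subsingleton (hint v hv₁ hv₂)
      ⟨hv₂, fun h => hvb (hc₂ v h.symm)⟩ hv₁ hc).symm
  have h₂ : G.neighborSet c₂ = {b} := Set.ext fun v => ⟨hc₂ v, fun h => h ▸ hc₂b⟩
  rw [h₁, h₂, Set.ncard_coe_finset, Finset.card_compl,
    Finset.card_eq_three.mpr ⟨c₁, c₂, b, hc, hb₁.symm, hb₂.symm, rfl⟩, Set.ncard_singleton]
  exact ⟨rfl, rfl⟩

lemma exceptional_or_hasHamiltonPathVia_left [Fintype V] (hcon : G.Connected)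
    (hcard : 6 ≤ Fintype.card V) (hc : c₁ ≠ c₂) (hne : ¬G.Adj c₁ c₂)
    (hint : ∀ v, v ≠ c₁ → v ≠ c₂ → (Gᶜ.neighborSet v).Subsingleton)
    (hb₁ : b ≠ c₁) (hb₂ : b ≠ c₂) (hnadj : ¬G.Adj c₁ b) :
    ((G.neighborSet c₁).ncard = Fintype.card V - 3 ∧ (G.neighborSet c₂).ncard = 1) ∨
      (G ⊔ edge c₁ b).HasHamiltonPathVia c₁ c₂ s(c₁, b) := by
  set S : Finset V := {c₁, c₂, b}ᶜ
  have hmem : ∀ v, v ∈ S ↔ v ≠ c₁ ∧ v ≠ c₂ ∧ v ≠ b := by simp [S]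
  have hcardS : S.card = Fintype.card V - 3 := by
    rw [Finset.card_compl, Finset.card_eq_three.mpr ⟨c₁, c₂, b, hc, hb₁.symm, hb₂.symm, rfl⟩]
  by_cases hc₂ : ∃ v ∈ S, G.Adj v c₂
  · right
    obtain ⟨v₀, hv₀⟩ : S.Nonempty := Finset.card_pos.mp (by omega)
    have hbU := isUniversal_sup_edge_right (hint b hb₁ hb₂) hb₁.symm hnadj
    obtain ⟨w, hw, hsupp⟩ := exists_isPath_through (H := G ⊔ edge c₁ b) hb₂
      (by simp [hmem]) (by simp [hmem])
      (fun v hv => compl_neighborSet_sup_subsingleton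
        (hint v ((hmem v).mp hv).1 ((hmem v).mp hv).2.1) _)
      ⟨v₀, hv₀, hbU ((hmem v₀).mp hv₀).2.2.symm⟩
      (hc₂.imp fun _ ⟨hv, h⟩ => ⟨hv, Or.inl h⟩) (by omega)
    obtain ⟨hw', hsupp'⟩ := isPath_cons_of_support_iff hw hsupp (hbU hb₁).symm hb₁.symm hc
      (by simp [hmem])
    exact ⟨_, hw'.isHamiltonian_of_mem fun v => (hsupp' v).mpr (by simp [hmem]; tauto), by simp⟩
  · left
    refine ncard_neighborSet_of_forall_adj_eq hcon hc hne hint hb₁ hb₂ hnadj fun v hv => ?_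
    by_contra hvb
    exact hc₂ ⟨v, (hmem v).mpr ⟨fun h => hne (h ▸ hv.symm), hv.ne.symm, hvb⟩, hv.symm⟩

lemma hasHamiltonPathVia_of_adj_right (hc : c₁ ≠ c₂)
    (hint : ∀ v, v ≠ c₁ → v ≠ c₂ → (Gᶜ.neighborSet v).Subsingleton)
    (ha₁ : a ≠ c₁) (ha₂ : a ≠ c₂) (hb₁ : b ≠ c₁) (hb₂ : b ≠ c₂) (hab : a ≠ b)
    (hnadj : ¬G.Adj a b) {S : Finset V} (hmem : ∀ v, v ∈ S ↔ v ≠ c₁ ∧ v ≠ c₂ ∧ v ≠ a ∧ v ≠ b)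
    (h2 : S.card = 2 → G.IsClique (S : Set V)) (hc₂ : ∃ v ∈ S, G.Adj v c₂) :
    (G ⊔ edge a b).HasHamiltonPathVia c₁ c₂ s(a, b) := by
  have haU := isUniversal_sup_edge_left (hint a ha₁ ha₂) hab hnadj
  have hbU := isUniversal_sup_edge_right (hint b hb₁ hb₂) hab hnadj
  obtain ⟨v₀, hv₀, hv₀c₂⟩ := hc₂
  obtain ⟨w, hw, hsupp⟩ := exists_isPath_through (H := G ⊔ edge a b) hb₂
    (by simp [hmem]) (by simp [hmem])
    (fun v hv => compl_neighborSet_sup_subsingleton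
      (hint v ((hmem v).mp hv).1 ((hmem v).mp hv).2.1) _)
    ⟨v₀, hv₀, hbU ((hmem v₀).mp hv₀).2.2.2.symm⟩
    ⟨v₀, hv₀, Or.inl hv₀c₂⟩ (fun h => (h2 h).mono le_sup_left)
  obtain ⟨hw₁, hsupp₁⟩ := isPath_cons_of_support_iff hw hsupp (haU hab) hab ha₂ (by simp [hmem])
  obtain ⟨hw₂, hsupp₂⟩ := isPath_cons_of_support_iff hw₁ hsupp₁ (haU ha₁).symm ha₁.symm hc
    (by simp [hmem]; tauto)
  exact ⟨_, hw₂.isHamiltonian_of_mem fun v => (hsupp₂ v).mpr (by simp [hmem]; tauto), by simp⟩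

lemma hasHamiltonPathVia_of_eq_pair (hc : c₁ ≠ c₂)
    (hint : ∀ v, v ≠ c₁ → v ≠ c₂ → (Gᶜ.neighborSet v).Subsingleton)
    (ha₁ : a ≠ c₁) (ha₂ : a ≠ c₂) (hb₁ : b ≠ c₁) (hb₂ : b ≠ c₂) (hab : a ≠ b)
    (hnadj : ¬G.Adj a b) {S : Finset V} (hmem : ∀ v, v ∈ S ↔ v ≠ c₁ ∧ v ≠ c₂ ∧ v ≠ a ∧ v ≠ b)
    {p q : V} (hS : S = {p, q}) (hpq : Gᶜ.Adj p q) :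
    (G ⊔ edge a b).HasHamiltonPathVia c₁ c₂ s(a, b) := by
  have haU := isUniversal_sup_edge_left (hint a ha₁ ha₂) hab hnadj
  have hbU := isUniversal_sup_edge_right (hint b hb₁ hb₂) hab hnadj
  obtain ⟨hp₁, hp₂, hpa, hpb⟩ := (hmem p).mp (by simp [hS])
  obtain ⟨hq₁, hq₂, hqa, hqb⟩ := (hmem q).mp (by simp [hS])
  have hc₁p : G.Adj c₁ p :=
    (adj_of_compl_neighborSet_subsingleton (hint p hp₁ hp₂) hpq hp₁ hq₁.symm).symm
  have hqc₂ : G.Adj q c₂ :=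
    adj_of_compl_neighborSet_subsingleton (hint q hq₁ hq₂) hpq.symm hq₂ hp₂.symm
  let w : (G ⊔ edge a b).Walk c₁ c₂ :=
    .cons (Or.inl hc₁p) <| .cons (haU hpa.symm).symm <| .cons (haU hab) <|
      .cons (hbU hqb.symm) <| .cons (Or.inl hqc₂) .nil
  have hw : w.IsPath := by
    simp only [w, Walk.isPath_def, Walk.support_cons, Walk.support_nil, List.nodup_cons,
      List.mem_cons, List.not_mem_nil, List.nodup_nil]
    have := hpq.ne
    grind
  refine ⟨w, hw.isHamiltonian_of_mem fun v => ?_, by simp [w]⟩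
  have := hmem v
  rw [hS, Finset.mem_insert, Finset.mem_singleton] at this
  simp only [w, Walk.support_cons, Walk.support_nil, List.mem_cons, List.not_mem_nil]
  tauto

lemma hasHamiltonPathVia_of_ne [Fintype V] (hcard : 6 ≤ Fintype.card V) (hc : c₁ ≠ c₂)
    (hint : ∀ v, v ≠ c₁ → v ≠ c₂ → (Gᶜ.neighborSet v).Subsingleton)
    (ha₁ : a ≠ c₁) (ha₂ : a ≠ c₂) (hb₁ : b ≠ c₁) (hb₂ : b ≠ c₂) (hab : a ≠ b)
    (hnadj : ¬G.Adj a b) : (G ⊔ edge a b).HasHamiltonPathVia c₁ c₂ s(a, b) := by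
  set S : Finset V := {c₁, c₂, a, b}ᶜ
  have hmem : ∀ v, v ∈ S ↔ v ≠ c₁ ∧ v ≠ c₂ ∧ v ≠ a ∧ v ≠ b := by simp [S]
  have hcardS : S.card = Fintype.card V - 4 := by
    rw [Finset.card_compl]
    simp [Finset.card_insert_of_notMem, hc, ha₁.symm, ha₂.symm, hb₁.symm, hb₂.symm, hab]
  by_cases hα : S.card = 2 ∧ ¬G.IsClique (S : Set V)
  · obtain ⟨p, q, -, hS⟩ := Finset.card_eq_two.mp hα.1
    rw [hS, Finset.coe_pair, isClique_pair, Classical.not_imp] at hα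
    exact hasHamiltonPathVia_of_eq_pair hc hint ha₁ ha₂ hb₁ hb₂ hab hnadj hmem hS hα.2
  have h2 : S.card = 2 → G.IsClique (S : Set V) := fun h => by_contra fun h' => hα ⟨h, h'⟩
  by_cases hc₂ : ∃ v ∈ S, G.Adj v c₂
  · exact hasHamiltonPathVia_of_adj_right hc hint ha₁ ha₂ hb₁ hb₂ hab hnadj hmem h2 hc₂
  -- every vertex of `S` misses `c₂`, hence sees `c₁`: route the path from `c₂` instead
  obtain ⟨v, hv⟩ : S.Nonempty := Finset.card_pos.mp (by omega)
  obtain ⟨hv₁, hv₂, -⟩ := (hmem v).mp hv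
  have hc₁ : ∃ v ∈ S, G.Adj v c₁ := ⟨v, hv, adj_of_compl_neighborSet_subsingleton
    (hint v hv₁ hv₂) ⟨hv₂, fun h => hc₂ ⟨v, hv, h⟩⟩ hv₁ hc⟩
  have := hasHamiltonPathVia_of_adj_right hc.symm (fun v h₂ h₁ => hint v h₁ h₂) hb₂ hb₁ ha₂ ha₁
    hab.symm (fun h => hnadj h.symm) (fun v => by rw [hmem]; tauto) h2 hc₁
  rw [edge_comm, Sym2.eq_swap] at this
  exact this.symm

lemma exceptional_or_hasHamiltonPathVia_of_mem_ends [Fintype V] (hcon : G.Connected)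
    (hcard : 6 ≤ Fintype.card V) (hc : c₁ ≠ c₂) (hne : ¬G.Adj c₁ c₂)
    (hint : ∀ v, v ≠ c₁ → v ≠ c₂ → (Gᶜ.neighborSet v).Subsingleton)
    (ha : a = c₁ ∨ a = c₂) (hab : a ≠ b) (hnadj : ¬G.Adj a b)
    (hne' : ({a, b} : Set V) ≠ {c₁, c₂}) :
    ((G.neighborSet c₁).ncard = 1 ∧ (G.neighborSet c₂).ncard = Fintype.card V - 3) ∨
    ((G.neighborSet c₁).ncard = Fintype.card V - 3 ∧ (G.neighborSet c₂).ncard = 1) ∨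
    (G ⊔ edge a b).HasHamiltonPathVia c₁ c₂ s(a, b) := by
  rcases ha with rfl | rfl
  · have hb₂ : b ≠ c₂ := by rintro rfl; exact hne' rfl
    rcases exceptional_or_hasHamiltonPathVia_left hcon hcard hc hne hint hab.symm hb₂ hnadj
      with h | h
    · exact Or.inr (Or.inl h)
    · exact Or.inr (Or.inr h)
  · have hb₁ : b ≠ c₁ := by rintro rfl; exact hne' (Set.pair_comm _ _)
    rcases exceptional_or_hasHamiltonPathVia_left hcon hcard hc.symm (fun h => hne h.symm)
      (fun v h₂ h₁ => hint v h₁ h₂) hab.symm hb₁ hnadj with h | h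
    · exact Or.inl h.symm
    · exact Or.inr (Or.inr h.symm)

theorem exceptional_or_hasHamiltonPathVia [Fintype V] (hcon : G.Connected)
    (hcard : 6 ≤ Fintype.card V) (hc : c₁ ≠ c₂) (hne : ¬G.Adj c₁ c₂)
    (hint : ∀ v, v ≠ c₁ → v ≠ c₂ → (Gᶜ.neighborSet v).Subsingleton)
    (hab : a ≠ b) (hnadj : ¬G.Adj a b) (hne' : ({a, b} : Set V) ≠ {c₁, c₂}) :
    ((G.neighborSet c₁).ncard = 1 ∧ (G.neighborSet c₂).ncard = Fintype.card V - 3) ∨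
    ((G.neighborSet c₁).ncard = Fintype.card V - 3 ∧ (G.neighborSet c₂).ncard = 1) ∨
    (G ⊔ edge a b).HasHamiltonPathVia c₁ c₂ s(a, b) := by
  by_cases ha : a = c₁ ∨ a = c₂
  · exact exceptional_or_hasHamiltonPathVia_of_mem_ends hcon hcard hc hne hint ha hab hnadj hne'
  by_cases hb : b = c₁ ∨ b = c₂
  · have := exceptional_or_hasHamiltonPathVia_of_mem_ends hcon hcard hc hne hint hb hab.symm
      (fun h => hnadj h.symm) (by rwa [Set.pair_comm])
    rwa [edge_comm, Sym2.eq_swap] at this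
  push Not at ha hb
  exact Or.inr (Or.inr (hasHamiltonPathVia_of_ne hcard hc hint ha.1 ha.2 hb.1 hb.2 hab hnadj))

end SimpleGraph

lemma exists_isIndexedPath_of_isHamiltonian [Fintype V] [DecidableEq V] {H : SimpleGraph V}
    {u v a b : V} {w : H.Walk u v} (hw : w.IsHamiltonian) (hab : s(a, b) ∈ w.edges) :
    ∃ x : ℕ → V, IsIndexedPath H x (Fintype.card V) ∧ x 1 = u ∧ x (Fintype.card V) = v ∧
      ∃ i, 1 ≤ i ∧ i < Fintype.card V ∧
        ((x i = a ∧ x (i + 1) = b) ∨ (x i = b ∧ x (i + 1) = a)) := by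
  have hlen : w.length = Fintype.card V - 1 := hw.length_eq
  have hpos : 0 < Fintype.card V := Fintype.card_pos_iff.mpr ⟨u⟩
  obtain ⟨k, hk, hedge⟩ := w.mk_mem_edges_iff_exists.mp hab
  -- the path is re-indexed from `0, …, n - 1` to `1, …, n`
  refine ⟨fun i => w.getVert (i - 1), ⟨fun i j hi hi' hj hj' hij => ?_, fun i hi hi' => ?_⟩,
    w.getVert_zero, ?_, k + 1, by omega, by omega, ?_⟩
  · have := hw.isPath.getVert_injOn (by simp only [Set.mem_ofPred_eq]; omega)
      (by simp only [Set.mem_ofPred_eq]; omega) hij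
    omega
  · simpa [Nat.sub_add_cancel hi] using w.adj_getVert_succ (i := i - 1) (by omega)
  · simp [← hlen]
  · simpa [Sym2.eq_iff] using hedge

/-- Proposition 4.1 (iii): after adding a non-edge `ab`, a Hamilton path from `c₁` to `c₂`
through `ab`, except possibly in the degenerate degree case. -/
theorem stmt_13 {V : Type*} [Fintype V] (G : SimpleGraph V) (hcon : G.Connected)
    (hcard : 6 ≤ Fintype.card V) (c₁ c₂ : V) (hc : c₁ ≠ c₂) (hne : ¬G.Adj c₁ c₂)
    (hdeg : ∀ v : V, v ≠ c₁ → v ≠ c₂ → (G.neighborSet v).ncard = Fintype.card V - 2)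
    (a b : V) (hab : a ≠ b) (hnadj : ¬G.Adj a b) (hne' : ({a, b} : Set V) ≠ {c₁, c₂}) :
    ((G.neighborSet c₁).ncard = 1 ∧ (G.neighborSet c₂).ncard = Fintype.card V - 3) ∨
    ((G.neighborSet c₁).ncard = Fintype.card V - 3 ∧ (G.neighborSet c₂).ncard = 1) ∨
    ∃ x : ℕ → V,
      IsIndexedPath (G ⊔ SimpleGraph.fromEdgeSet {s(a, b)}) x (Fintype.card V) ∧
      x 1 = c₁ ∧ x (Fintype.card V) = c₂ ∧
      ∃ i, 1 ≤ i ∧ i < Fintype.card V ∧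
        ((x i = a ∧ x (i + 1) = b) ∨ (x i = b ∧ x (i + 1) = a)) := by
  classical
  have hint : ∀ v, v ≠ c₁ → v ≠ c₂ → (Gᶜ.neighborSet v).Subsingleton := fun v h₁ h₂ =>
    compl_neighborSet_subsingleton_of_ncard_eq (hdeg v h₁ h₂)
  rcases exceptional_or_hasHamiltonPathVia hcon hcard hc hne hint hab hnadj hne' with
    h | h | ⟨p, hp, he⟩
  · exact Or.inl h
  · exact Or.inr (Or.inl h)
  · exact Or.inr (Or.inr (exists_isIndexedPath_of_isHamiltonian hp he))
end

section
/- Let k ≥ 9 and ℓ = ⌊(k-1)/2⌋, let r and s be integers with 1 ≤ r ≤ ℓ-2 and s ≥ 2, let n ≥ k, and let t be an integer with ℓ-r+1 ≤ t ≤ ℓ. Define f_s(n,k,r) = C(k-ℓ, s) + C(ℓ+1, s) - C(ℓ-r+1, s) + (n-k+ℓ-r)·C(ℓ-r+1, s-1). Then f_s(n,k,r) ≤ h_s(n,k,t) = C(k-t, s) + (n-k+t)·C(t, s-1). -/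
open SimpleGraph

variable {V : Type*}

lemma lb_aux (m s d : ℕ) : m.choose (s+1) + d * m.choose s ≤ (m+d).choose (s+1) := by
  induction d with
  | zero => simp
  | succ d ih =>
    have h := Nat.choose_succ_succ' (m+d) s
    have h2 : m.choose s ≤ (m+d).choose s := Nat.choose_le_choose _ (by omega)
    have : m + (d+1) = (m+d) + 1 := by omega
    rw [this, h]
    nlinarith

lemma ub_aux (m s d : ℕ) : (m+d).choose (s+1) ≤ m.choose (s+1) + d * (m+d-1).choose s := by
  induction d with
  | zero => simp
  | succ d ih =>
    have h := Nat.choose_succ_succ' (m+d) s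
    have h2 : (m+d-1).choose s ≤ (m+d).choose s := Nat.choose_le_choose _ (by omega)
    have he : m + (d+1) = (m+d) + 1 := by omega
    rw [he, h]
    have he2 : m + d + 1 - 1 = m + d := by omega
    rw [he2]
    nlinarith

lemma lb2 (m M s : ℕ) (h : m ≤ M) : m.choose (s+1) + (M-m) * m.choose s ≤ M.choose (s+1) := by
  obtain ⟨d, rfl⟩ := Nat.le.dest h
  simpa using lb_aux m s d

lemma ub2 (m M s : ℕ) (h : m ≤ M) : M.choose (s+1) ≤ m.choose (s+1) + (M-m) * (M-1).choose s := by
  obtain ⟨d, rfl⟩ := Nat.le.dest h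
  simpa using ub_aux m s d

/-- The arithmetic claim `f_s(n,k,r) ≤ h_s(n,k,t)` from Lemma 4.1. -/
theorem stmt_14 (k ℓ r s n t : ℕ) (hk : 9 ≤ k) (hℓ : ℓ = (k - 1) / 2)
    (hr1 : 1 ≤ r) (hr2 : r ≤ ℓ - 2) (hs : 2 ≤ s) (hn : k ≤ n)
    (ht1 : ℓ - r + 1 ≤ t) (ht2 : t ≤ ℓ) :
    Nat.choose (k - ℓ) s + Nat.choose (ℓ + 1) s - Nat.choose (ℓ - r + 1) s
        + (n - k + ℓ - r) * Nat.choose (ℓ - r + 1) (s - 1)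
      ≤ Nat.choose (k - t) s + (n - k + t) * Nat.choose t (s - 1) := by
  obtain ⟨s', rfl⟩ : ∃ s', s = s' + 1 := ⟨s - 1, by omega⟩
  simp only [Nat.add_sub_cancel]
  have hl4 : 4 ≤ ℓ := by omega
  have hrl : r + 2 ≤ ℓ := by omega
  set a := ℓ - r + 1 with ha
  have hat : a ≤ t := by omega
  have h1 : (ℓ+1).choose (s'+1) ≤ (t+1).choose (s'+1) + (ℓ - t) * ℓ.choose s' := by
    have := ub2 (t+1) (ℓ+1) s' (by omega)
    simpa [show ℓ + 1 - (t+1) = ℓ - t from by omega] using this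
  have h2 : (t+1).choose (s'+1) ≤ a.choose (s'+1) + (t+1-a) * t.choose s' := by
    have := ub2 a (t+1) s' (by omega)
    simpa using this
  have h3 : (k-ℓ).choose (s'+1) + (ℓ-t) * (k-ℓ).choose s' ≤ (k-t).choose (s'+1) := by
    have := lb2 (k-ℓ) (k-t) s' (by omega)
    simpa [show k - t - (k - ℓ) = ℓ - t from by omega] using this
  have h4 : (ℓ-t) * ℓ.choose s' ≤ (ℓ-t) * (k-ℓ).choose s' :=
    Nat.mul_le_mul_left _ (Nat.choose_le_choose _ (by omega))
  have h5 : (n-k+ℓ-r) * a.choose s' ≤ (n-k+ℓ-r) * t.choose s' :=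
    Nat.mul_le_mul_left _ (Nat.choose_le_choose _ hat)
  have hm : (n-k+t) * t.choose s' = (n-k+ℓ-r) * t.choose s' + (t+1-a) * t.choose s' := by
    rw [← Nat.add_mul]; congr 1; omega
  set Ca1 := a.choose (s'+1)
  set Cl1 := (ℓ+1).choose (s'+1)
  set Ct1 := (t+1).choose (s'+1)
  set X := (k-ℓ).choose (s'+1)
  set Y := (k-t).choose (s'+1)
  set p1 := (ℓ-t) * ℓ.choose s'
  set p2 := (t+1-a) * t.choose s'
  set p3 := (ℓ-t) * (k-ℓ).choose s'
  set p4 := (n-k+ℓ-r) * a.choose s'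
  set p5 := (n-k+ℓ-r) * t.choose s'
  set p6 := (n-k+t) * t.choose s'
  omega
end

section
/- Let k ≥ 10 be an even integer, ℓ = (k-2)/2, let s ≥ 2 and n ≥ k be integers, and let t be an integer with 4 ≤ t ≤ ℓ. Define g_s(n,k,3) = 2·C(ℓ+1, s) - C(3, s) + ⌊(n-k+3)/2⌋·(C(5, s) - C(3, s)) + i·C(4, s), where i = 1 if n-k+3 is odd and i = 0 if n-k+3 is even. Then g_s(n,k,3) ≤ h_s(n,k,t) = C(k-t, s) + (n-k+t)·C(t, s-1). -/
open SimpleGraph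

variable {V : Type*}

/-!
Write `k = 2ℓ + 2` and `s = p + 2`. By Pascal's rule `C(5,s) - C(3,s) = C(4,s-1) + C(3,s-1)` and
`C(4,s) = C(3,s-1) + C(3,s)`, and `C(4,s-1) ≤ C(t,s-1)`; since
`n - k + t = 2⌊(n-k+3)/2⌋ + i + (t - 3)`, the terms growing with `n` are dominated termwise and it
remains to show `2 C(ℓ+1,s) ≤ C(k-t,s) + (t-3) C(t,s-1) + C(3,s-2)`.
With `u = ℓ + 1 - t ≥ 1`, the hockey-stick identity bounds the increments of `C(·,s)` on
`[t, ℓ+1]` above by `u C(ℓ,s-1)` and on `[ℓ+1, k-t]` below by `u C(ℓ+1,s-1)`, so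
`2 C(ℓ+1,s) ≤ C(k-t,s) + C(t,s) - u C(ℓ,s-2)`; finally `C(t,s) ≤ (t-3) C(t,s-1) + C(t,s-2) + C(3,s-2)`
for `t ≥ 4` by the ratio `C(t,s) / C(t,s-1) = (t-s+1)/s`.
-/

theorem Nat.choose_add_mul_choose_le_choose_add (N u s : ℕ) :
    N.choose (s + 1) + u * N.choose s ≤ (N + u).choose (s + 1) := by
  induction u with
  | zero => simp
  | succ u ih =>
    have hmono : N.choose s ≤ (N + u).choose s := Nat.choose_le_choose s (by omega)
    rw [← add_assoc, Nat.choose_succ_succ', add_one_mul]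
    omega

theorem Nat.choose_add_le_choose_add_mul_choose (t u s : ℕ) :
    (t + u).choose (s + 1) ≤ t.choose (s + 1) + u * (t + u - 1).choose s := by
  induction u with
  | zero => simp
  | succ u ih =>
    have hmono : (t + u - 1).choose s ≤ (t + u).choose s := Nat.choose_le_choose s (by omega)
    have hmul := Nat.mul_le_mul_left u hmono
    rw [← add_assoc, Nat.choose_succ_succ', add_one_mul, Nat.add_sub_cancel]
    omega

theorem choose_le_sub_three_mul_choose_add {t : ℕ} (ht : 4 ≤ t) (p : ℕ) :
    t.choose (p + 2) ≤ (t - 3) * t.choose (p + 1) + t.choose p + Nat.choose 3 p := by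
  have hratio : t.choose (p + 2) * (p + 2) = t.choose (p + 1) * (t - (p + 1)) :=
    Nat.choose_succ_right_eq t (p + 1)
  obtain rfl | hp := Nat.eq_zero_or_pos p
  · obtain ⟨a, rfl⟩ : ∃ a, t = a + 4 := ⟨t - 4, by omega⟩
    simp only [zero_add, Nat.choose_one_right, Nat.choose_zero_right] at hratio ⊢
    rw [show a + 4 - 1 = a + 3 by omega] at hratio
    rw [show a + 4 - 3 = a + 1 by omega]
    nlinarith
  · have hthird : 3 * t.choose (p + 2) ≤ (t - 2) * t.choose (p + 1) := by
      have := Nat.mul_le_mul_left (t.choose (p + 1)) (show t - (p + 1) ≤ t - 2 by omega)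
      nlinarith
    have hcoeff : (t - 2) * t.choose (p + 1) ≤ 3 * ((t - 3) * t.choose (p + 1)) := by
      rw [← mul_assoc]; exact Nat.mul_le_mul_right _ (by omega)
    omega

theorem two_mul_choose_le {ℓ t : ℕ} (ht : 4 ≤ t) (htℓ : t ≤ ℓ) (p : ℕ) :
    2 * (ℓ + 1).choose (p + 2)
      ≤ (2 * ℓ + 2 - t).choose (p + 2) + (t - 3) * t.choose (p + 1) + Nat.choose 3 p := by
  obtain ⟨u, hu, rfl⟩ : ∃ u, 1 ≤ u ∧ ℓ = t + u - 1 := ⟨ℓ + 1 - t, by omega, by omega⟩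
  have hlow : (t + u).choose (p + 2) + u * (t + u).choose (p + 1) ≤ (t + u + u).choose (p + 2) :=
    Nat.choose_add_mul_choose_le_choose_add (t + u) u (p + 1)
  have hhigh : (t + u).choose (p + 2) ≤ t.choose (p + 2) + u * (t + u - 1).choose (p + 1) :=
    Nat.choose_add_le_choose_add_mul_choose t u (p + 1)
  have hpascal : (t + u).choose (p + 1) = (t + u - 1).choose p + (t + u - 1).choose (p + 1) := by
    rw [← Nat.choose_succ_succ', Nat.sub_add_cancel (by omega)]
  have hbottom : t.choose p ≤ u * (t + u - 1).choose p :=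
    (Nat.choose_le_choose p (by omega)).trans (Nat.le_mul_of_pos_left _ hu)
  have hsmall := choose_le_sub_three_mul_choose_add ht p
  rw [show t + u - 1 + 1 = t + u by omega, show 2 * (t + u - 1) + 2 - t = t + u + u by omega]
  rw [hpascal, mul_add] at hlow
  omega

theorem stmt_15_general (k ℓ s n t : ℕ) (heven : Even k) (hℓ : ℓ = (k - 2) / 2)
    (hs : 2 ≤ s) (ht1 : 4 ≤ t) (ht2 : t ≤ ℓ) :
    2 * Nat.choose (ℓ + 1) s - Nat.choose 3 s
        + (n - k + 3) / 2 * (Nat.choose 5 s - Nat.choose 3 s)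
        + (n - k + 3) % 2 * Nat.choose 4 s
      ≤ Nat.choose (k - t) s + (n - k + t) * Nat.choose t (s - 1) := by
  obtain ⟨p, rfl⟩ : ∃ p, s = p + 2 := ⟨s - 2, by omega⟩
  have hkℓ : k - t = 2 * ℓ + 2 - t := by obtain ⟨c, hc⟩ := heven; omega
  have hsplit : n - k + t = 2 * ((n - k + 3) / 2) + (n - k + 3) % 2 + (t - 3) := by omega
  have h5 : Nat.choose 5 (p + 2) - Nat.choose 3 (p + 2)
      = Nat.choose 3 p + 2 * Nat.choose 3 (p + 1) := by
    simp only [Nat.choose_succ_succ']; omega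
  have h4 : Nat.choose 4 (p + 2) = Nat.choose 3 (p + 1) + Nat.choose 3 (p + 2) :=
    Nat.choose_succ_succ' 3 (p + 1)
  have hfour : Nat.choose 3 p + Nat.choose 3 (p + 1) ≤ t.choose (p + 1) :=
    (Nat.choose_succ_succ' 3 p).symm.trans_le (Nat.choose_le_choose _ ht1)
  have hthree : Nat.choose 3 (p + 2) ≤ (ℓ + 1).choose (p + 2) := Nat.choose_le_choose _ (by omega)
  have hmain := two_mul_choose_le ht1 ht2 p
  rw [hkℓ, hsplit, h5, h4, show p + 2 - 1 = p + 1 from rfl]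
  obtain ⟨q, hq, hqdef⟩ : ∃ q, 1 ≤ q ∧ (n - k + 3) / 2 = q := ⟨_, by omega, rfl⟩
  obtain ⟨r, hr, hrdef⟩ : ∃ r, r ≤ 1 ∧ (n - k + 3) % 2 = r := ⟨_, by omega, rfl⟩
  have hpairs : q * (Nat.choose 3 p + 2 * Nat.choose 3 (p + 1)) + Nat.choose 3 p
      ≤ 2 * (q * t.choose (p + 1)) := by nlinarith
  rw [hqdef, hrdef, add_mul, add_mul, mul_assoc]
  interval_cases r <;> omega

/-- The arithmetic claim `g_s(n,k,3) ≤ h_s(n,k,t)` from Lemma 4.1. -/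
theorem stmt_15 (k ℓ s n t : ℕ) (hk : 10 ≤ k) (heven : Even k) (hℓ : ℓ = (k - 2) / 2)
    (hs : 2 ≤ s) (hn : k ≤ n) (ht1 : 4 ≤ t) (ht2 : t ≤ ℓ) :
    2 * Nat.choose (ℓ + 1) s - Nat.choose 3 s
        + (n - k + 3) / 2 * (Nat.choose 5 s - Nat.choose 3 s)
        + (n - k + 3) % 2 * Nat.choose 4 s
      ≤ Nat.choose (k - t) s + (n - k + t) * Nat.choose t (s - 1) :=
  stmt_15_general k ℓ s n t heven hℓ hs ht1 ht2
end

section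
/- Let ℓ and s be integers with 2 ≤ s ≤ ℓ-1 and ℓ ≥ 4, and additionally ℓ ≥ 5 whenever s = 3. Then (ℓ-1)·C(ℓ-1, s-1) ≥ C(ℓ+1, s) - C(2, s). -/
open SimpleGraph

variable {V : Type*}

/-- The binomial inequality used in the proof of Theorem 1.1. -/
theorem stmt_18 (ℓ s : ℕ) (hs1 : 2 ≤ s) (hs2 : s ≤ ℓ - 1) (hℓ : 4 ≤ ℓ)
    (h3 : s = 3 → 5 ≤ ℓ) :
    Nat.choose (ℓ + 1) s - Nat.choose 2 s ≤ (ℓ - 1) * Nat.choose (ℓ - 1) (s - 1) := by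
  rcases Nat.lt_or_ge s 3 with hs | hs
  · -- s = 2
    have hse : s = 2 := by omega
    subst hse
    obtain ⟨m, rfl⟩ : ∃ m, ℓ = m + 4 := ⟨ℓ - 4, by omega⟩
    simp only [Nat.choose_one_right, Nat.choose_two_right, Nat.choose_self,
      show m + 4 + 1 - 1 = m + 4 from rfl, show m + 4 - 1 = m + 3 from rfl,
      show 2 - 1 = 1 from rfl]
    have h2 : (m + 4 + 1) * (m + 4) / 2 ≤ (m + 3) * (m + 3) + 1 := by
      rw [Nat.div_le_iff_le_mul_add_pred two_pos]
      nlinarith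
    omega
  · -- s ≥ 3
    have h20 : Nat.choose 2 s = 0 := Nat.choose_eq_zero_of_lt (by omega)
    rw [h20, Nat.sub_zero]
    obtain ⟨u, rfl⟩ : ∃ u, s = u + 3 := ⟨s - 3, by omega⟩
    obtain ⟨v, rfl⟩ : ∃ v, ℓ = u + v + 4 := ⟨ℓ - u - 4, by omega⟩
    have huv : 1 ≤ u + v := by
      rcases Nat.eq_zero_or_pos u with hu | hu
      · subst hu; have := h3 rfl; omega
      · omega
    set a := Nat.choose (u + v + 3) (u + 2) with ha
    set b := Nat.choose (u + v + 3) (u + 3) with hb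
    set c := Nat.choose (u + v + 3) (u + 1) with hc
    have e1 : Nat.choose (u + v + 4 + 1) (u + 3)
        = Nat.choose (u + v + 3 + 1) (u + 2) + Nat.choose (u + v + 3 + 1) (u + 3) :=
      Nat.choose_succ_succ' (u + v + 4) (u + 2)
    have e2 : Nat.choose (u + v + 3 + 1) (u + 2)
        = Nat.choose (u + v + 3) (u + 1) + Nat.choose (u + v + 3) (u + 2) :=
      Nat.choose_succ_succ' (u + v + 3) (u + 1)
    have e3 : Nat.choose (u + v + 3 + 1) (u + 3)
        = Nat.choose (u + v + 3) (u + 2) + Nat.choose (u + v + 3) (u + 3) :=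
      Nat.choose_succ_succ' (u + v + 3) (u + 2)
    have hpascal : Nat.choose (u + v + 4 + 1) (u + 3) = b + 2 * a + c := by
      rw [e1, e2, e3, ← ha, ← hb, ← hc]; ring
    rw [hpascal, show u + v + 4 - 1 = u + v + 3 from rfl,
      show u + 3 - 1 = u + 2 from rfl]
    have hid1 : b * (u + 3) = a * (v + 1) := by
      have := Nat.choose_succ_right_eq (u + v + 3) (u + 2)
      rw [show u + 2 + 1 = u + 3 from rfl, show u + v + 3 - (u + 2) = v + 1 by omega] at this
      simpa [ha, hb] using this
    have hid2 : a * (u + 2) = c * (v + 2) := by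
      have := Nat.choose_succ_right_eq (u + v + 3) (u + 1)
      rw [show u + 1 + 1 = u + 2 from rfl, show u + v + 3 - (u + 1) = v + 2 by omega] at this
      simpa [ha, hc] using this
    have hmul : 0 < (u + 3) * (v + 2) := by positivity
    refine Nat.le_of_mul_le_mul_left ?_ hmul
    calc (u + 3) * (v + 2) * (b + 2 * a + c)
        = (v + 2) * (b * (u + 3)) + 2 * (u + 3) * (v + 2) * a + (u + 3) * (c * (v + 2)) := by
          ring
      _ = ((v + 2) * (v + 1) + 2 * (u + 3) * (v + 2) + (u + 3) * (u + 2)) * a := by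
          rw [hid1, ← hid2]; ring
      _ ≤ ((u + 3) * (v + 2) * (u + v + 3)) * a := by
          refine Nat.mul_le_mul_right a ?_
          rcases Nat.eq_zero_or_pos v with hv | hv
          · subst hv; nlinarith
          · obtain ⟨w, rfl⟩ : ∃ w, v = w + 1 := ⟨v - 1, by omega⟩
            nlinarith [mul_nonneg (mul_nonneg u.zero_le u.zero_le) w.zero_le,
              mul_nonneg (mul_nonneg u.zero_le w.zero_le) w.zero_le,
              mul_nonneg u.zero_le w.zero_le, sq_nonneg u, sq_nonneg w]
      _ = (u + 3) * (v + 2) * ((u + v + 3) * a) := by ring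
end
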